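/- Let T be the 3×3 unitary matrix with rows (0, 1/√2, 1/√2), (1/√2, −1/2, 1/2), (1/√2, 1/2, −1/2) multiplied on the right by diag(κ₁, κ₂, −κ₂), where κ₁, κ₂ are unit complex numbers. Then the eigenvalues of T are κ, κω, κω² where κ³ = −κ₁κ₂² and ω = e^{2πi/3}; in particular T³ = −κ₁κ₂² · I. -/

import Mathlib

noncomputable def ω : ℂ := Complex.exp (2 * Real.pi * Complex.I / 3)

noncomputable def M : Matrix (Fin 3) (Fin 3) ℂ :=
  !![0, (Real.sqrt 2 : ℂ)⁻¹, (Real.sqrt 2 : ℂ)⁻¹;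
     (Real.sqrt 2 : ℂ)⁻¹, -(1/2), 1/2;
     (Real.sqrt 2 : ℂ)⁻¹, 1/2, -(1/2)]

lemma stmt19_omega_cube : ω ^ 3 = 1 := by
  rw [ω, ← Complex.exp_nat_mul]
  rw [show ((3:ℕ) : ℂ) * (2 * Real.pi * Complex.I / 3) = 2 * Real.pi * Complex.I by
    push_cast; ring]
  exact Complex.exp_two_pi_mul_I

lemma stmt19_omega_ne_one : ω ≠ 1 := by
  intro h
  rw [ω, Complex.exp_eq_one_iff] at h
  obtain ⟨n, hn⟩ := h
  have hπI : (2 : ℂ) * Real.pi * Complex.I ≠ 0 := by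
    refine mul_ne_zero (mul_ne_zero (by norm_num) ?_) Complex.I_ne_zero
    simpa using Real.pi_ne_zero
  have h0 : (2 : ℂ) * Real.pi * Complex.I * (1 - 3 * n) = 0 := by linear_combination 3 * hn
  rcases mul_eq_zero.mp h0 with h | h
  · exact hπI h
  · have : ((3 * n : ℤ) : ℂ) = 1 := by push_cast; linear_combination -h
    have : (3 * n : ℤ) = 1 := by exact_mod_cast this
    omega

lemma stmt19_omega_sum : ω ^ 2 + ω + 1 = 0 := by
  have h : (ω - 1) * (ω ^ 2 + ω + 1) = 0 := by linear_combination stmt19_omega_cube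
  rcases mul_eq_zero.mp h with h | h
  · exact absurd (sub_eq_zero.mp h) stmt19_omega_ne_one
  · exact h

set_option maxHeartbeats 2000000 in
lemma stmt19_cube (κ₁ κ₂ s : ℂ) (hs : s * s = 1/2) :
    (!![0, s*κ₂, -(s*κ₂);
       s*κ₁, -(κ₂/2), -(κ₂/2);
       s*κ₁, κ₂/2, κ₂/2] : Matrix (Fin 3) (Fin 3) ℂ) ^ 3
      = (-(κ₁ * κ₂ ^ 2)) • (1 : Matrix (Fin 3) (Fin 3) ℂ) := by
  rw [pow_succ, pow_two]
  ext i j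
  fin_cases i <;> fin_cases j <;>
    simp [Matrix.mul_apply, Fin.sum_univ_three, Matrix.one_apply, Matrix.vecHead,
      Matrix.vecTail] <;>
    first
      | linear_combination (κ₁*κ₂^2) * hs
      | linear_combination (-(κ₁*κ₂^2)) * hs
      | linear_combination (-(2*κ₁*κ₂^2)) * hs
      | linear_combination (-(3*κ₁*κ₂^2)) * hs
      | linear_combination (3*κ₁*κ₂^2) * hs
      | ring

set_option maxHeartbeats 1000000 in
lemma stmt19_det (κ₁ κ₂ s lam : ℂ) (hs : s * s = 1/2)
    (hl : lam ^ 3 = -(κ₁ * κ₂ ^ 2)) :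
    (algebraMap ℂ (Matrix (Fin 3) (Fin 3) ℂ) lam -
      !![0, s*κ₂, -(s*κ₂);
         s*κ₁, -(κ₂/2), -(κ₂/2);
         s*κ₁, κ₂/2, κ₂/2]).det = 0 := by
  rw [Matrix.det_fin_three]
  simp [Matrix.algebraMap_matrix_apply, Matrix.vecHead, Matrix.vecTail]
  linear_combination hl + (2*κ₁*κ₂^2) * hs

theorem stmt19 (κ₁ κ₂ : ℂ) (h₁ : ‖κ₁‖ = 1) (h₂ : ‖κ₂‖ = 1)
    (T : Matrix (Fin 3) (Fin 3) ℂ)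
    (hT : T = M * Matrix.diagonal ![κ₁, κ₂, -κ₂]) :
    (∀ κ : ℂ, κ ^ 3 = -(κ₁ * κ₂ ^ 2) →
      spectrum ℂ T = {κ, κ * ω, κ * ω ^ 2}) ∧
    T ^ 3 = (-(κ₁ * κ₂ ^ 2)) • (1 : Matrix (Fin 3) (Fin 3) ℂ) := by
  obtain ⟨s, hsdef⟩ : ∃ s : ℂ, s = (Real.sqrt 2 : ℂ)⁻¹ := ⟨_, rfl⟩
  have h2 : ((Real.sqrt 2 : ℝ) : ℂ) * ((Real.sqrt 2 : ℝ) : ℂ) = 2 := by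
    norm_cast
    exact Real.mul_self_sqrt (by norm_num)
  have hs : s * s = 1/2 := by
    rw [hsdef, ← mul_inv, h2]; norm_num
  have hTe : T = !![0, s*κ₂, -(s*κ₂);
       s*κ₁, -(κ₂/2), -(κ₂/2);
       s*κ₁, κ₂/2, κ₂/2] := by
    rw [hT, hsdef]
    ext i j
    fin_cases i <;> fin_cases j <;>
      simp [M, Matrix.mul_apply, Fin.sum_univ_three, Matrix.diagonal,
        Matrix.vecHead, Matrix.vecTail] <;> ring
  have hc : T ^ 3 = (-(κ₁ * κ₂ ^ 2)) • (1 : Matrix (Fin 3) (Fin 3) ℂ) := by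
    rw [hTe]; exact stmt19_cube κ₁ κ₂ s hs
  refine ⟨?_, hc⟩
  intro κ hκ
  have key : ∀ lam : ℂ, lam ^ 3 = -(κ₁ * κ₂ ^ 2) → lam ∈ spectrum ℂ T := by
    intro lam hl
    rw [spectrum.mem_iff, Matrix.isUnit_iff_isUnit_det]
    rw [hTe, stmt19_det κ₁ κ₂ s lam hs hl]
    simp
  ext lam
  simp only [Set.mem_insert_iff, Set.mem_singleton_iff]
  constructor
  · intro hmem
    have h3 : lam ^ 3 ∈ spectrum ℂ ((Polynomial.aeval T) ((Polynomial.X : Polynomial ℂ) ^ 3)) :=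
      spectrum.subset_polynomial_aeval T ((Polynomial.X : Polynomial ℂ) ^ 3)
        ⟨lam, hmem, by simp⟩
    rw [map_pow, Polynomial.aeval_X] at h3
    rw [hc, ← Algebra.algebraMap_eq_smul_one, spectrum.scalar_eq] at h3
    have hl : lam ^ 3 = -(κ₁ * κ₂ ^ 2) := h3
    have hfac : (lam - κ) * (lam - κ * ω) * (lam - κ * ω ^ 2) = 0 := by
      linear_combination hl - hκ + (κ^2*lam - κ*lam^2) * stmt19_omega_sum +
        (κ^2*lam - κ^3) * stmt19_omega_cube
    rcases mul_eq_zero.mp hfac with h | h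
    · rcases mul_eq_zero.mp h with h | h
      · exact Or.inl (sub_eq_zero.mp h)
      · exact Or.inr (Or.inl (sub_eq_zero.mp h))
    · exact Or.inr (Or.inr (sub_eq_zero.mp h))
  · rintro (h | h | h) <;> rw [h]
    · exact key κ hκ
    · refine key _ ?_
      have : (κ * ω) ^ 3 = κ ^ 3 * ω ^ 3 := by ring
      rw [this, stmt19_omega_cube, mul_one, hκ]
    · refine key _ ?_
      have : (κ * ω ^ 2) ^ 3 = κ ^ 3 * (ω ^ 3) ^ 2 := by ring
      rw [this, stmt19_omega_cube, one_pow, mul_one, hκ]
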